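/- The scheduling game on 2 unrelated machines under the RANDOM policy is a potential game: every sequence of better response moves terminates in a pure Nash equilibrium. -/
import Mathlib


/-- Load of machine `j` under profile `σ` (unrelated machines). -/
def urLoad {n m : ℕ} (p : Fin n → Fin m → ℝ) (σ : Fin n → Fin m) (j : Fin m) : ℝ :=
  ∑ i ∈ Finset.univ.filter (fun i => σ i = j), p i j

/-- RANDOM cost of job `i`: `(ℓ_{σ i} + p_{i,σ i}) / 2`. -/
noncomputable def urRandomCost {n m : ℕ} (p : Fin n → Fin m → ℝ) (σ : Fin n → Fin m) (i : Fin n) : ℝ :=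
  (urLoad p σ (σ i) + p i (σ i)) / 2

/-- A better response move under RANDOM. -/
def urRandomStep {n m : ℕ} (p : Fin n → Fin m → ℝ) (σ σ' : Fin n → Fin m) : Prop :=
  ∃ (i : Fin n) (b : Fin m), σ' = Function.update σ i b ∧
    urRandomCost p σ' i < urRandomCost p σ i

/-- Pure Nash equilibrium under RANDOM. -/
def urRandomNE {n m : ℕ} (p : Fin n → Fin m → ℝ) (σ : Fin n → Fin m) : Prop :=
  ∀ (i : Fin n) (b : Fin m), urRandomCost p σ i ≤ urRandomCost p (Function.update σ i b) i

/-- Potential function: `(ℓ₀ - ℓ₁)² + 3 Σ_i p_{i,σ i}²`. -/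
noncomputable def urPhi {n : ℕ} (p : Fin n → Fin 2 → ℝ) (σ : Fin n → Fin 2) : ℝ :=
  (urLoad p σ 0 - urLoad p σ 1) ^ 2 + 3 * ∑ i, (p i (σ i)) ^ 2

lemma urLoad_update {n : ℕ} (p : Fin n → Fin 2 → ℝ) (σ : Fin n → Fin 2)
    (i : Fin n) (b j : Fin 2) :
    urLoad p (Function.update σ i b) j
      = urLoad p σ j - (if σ i = j then p i j else 0) + (if b = j then p i j else 0) := by
  classical
  have hrw : ∀ τ : Fin n → Fin 2, urLoad p τ j = ∑ k, if τ k = j then p k j else 0 := by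
    intro τ; rw [urLoad, Finset.sum_filter]
  rw [hrw, hrw]
  have hfun : (fun k => if (Function.update σ i b) k = j then p k j else 0)
      = Function.update (fun k => if σ k = j then p k j else 0) i
          (if b = j then p i j else 0) := by
    funext k
    rcases eq_or_ne k i with rfl | hk
    · simp
    · simp [Function.update_of_ne hk]
  rw [hfun, Finset.sum_update_of_mem (Finset.mem_univ i)]
  have hsd : ∑ k ∈ Finset.univ \ {i}, (if σ k = j then p k j else 0)
      = (∑ k, if σ k = j then p k j else 0) - (if σ i = j then p i j else 0) := by
    have := Finset.sum_sdiff (f := fun k => if σ k = j then p k j else 0)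
      (Finset.singleton_subset_iff.mpr (Finset.mem_univ i))
    rw [Finset.sum_singleton] at this
    linarith
  rw [hsd]; ring

lemma urSumSq_update {n : ℕ} (p : Fin n → Fin 2 → ℝ) (σ : Fin n → Fin 2)
    (i : Fin n) (b : Fin 2) :
    ∑ k, (p k ((Function.update σ i b) k)) ^ 2
      = (∑ k, (p k (σ k)) ^ 2) - (p i (σ i)) ^ 2 + (p i b) ^ 2 := by
  classical
  have hfun : (fun k => (p k ((Function.update σ i b) k)) ^ 2)
      = Function.update (fun k => (p k (σ k)) ^ 2) i ((p i b) ^ 2) := by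
    funext k
    rcases eq_or_ne k i with rfl | hk
    · simp
    · simp [Function.update_of_ne hk]
  rw [hfun, Finset.sum_update_of_mem (Finset.mem_univ i)]
  have hsd : ∑ k ∈ Finset.univ \ {i}, (p k (σ k)) ^ 2
      = (∑ k, (p k (σ k)) ^ 2) - (p i (σ i)) ^ 2 := by
    have := Finset.sum_sdiff (f := fun k => (p k (σ k)) ^ 2)
      (Finset.singleton_subset_iff.mpr (Finset.mem_univ i))
    rw [Finset.sum_singleton] at this
    linarith
  rw [hsd]; ring

lemma urPhi_decrease {n : ℕ} (p : Fin n → Fin 2 → ℝ) (hp : ∀ i j, 0 < p i j)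
    {σ σ' : Fin n → Fin 2} (h : urRandomStep p σ σ') : urPhi p σ' < urPhi p σ := by
  classical
  obtain ⟨i, b, rfl, hlt⟩ := h
  have hba : b ≠ σ i := by
    rintro rfl
    rw [Function.update_eq_self] at hlt
    exact absurd hlt (lt_irrefl _)
  have hcost : urLoad p (Function.update σ i b) b + p i b
      < urLoad p σ (σ i) + p i (σ i) := by
    have h' := hlt
    unfold urRandomCost at h'
    rw [Function.update_self] at h'
    linarith
  have hcond : urLoad p σ b + p i b + p i b < urLoad p σ (σ i) + p i (σ i) := by
    rw [urLoad_update] at hcost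
    rw [if_neg (fun hh => hba hh.symm), if_pos rfl] at hcost
    linarith
  have h2 : ∀ x : Fin 2, x = 0 ∨ x = 1 := by decide
  rcases h2 (σ i) with ha | ha <;> rcases h2 b with hb | hb
  · exact absurd (hb.trans ha.symm) hba
  · -- σ i = 0, b = 1
    rw [ha, hb] at hcond
    unfold urPhi
    rw [urLoad_update, urLoad_update, urSumSq_update, ha, hb]
    simp only [if_pos rfl, if_true, if_neg (by decide : ¬ ((0 : Fin 2) = 1)),
      if_neg (by decide : ¬ ((1 : Fin 2) = 0))]
    have hprod : 0 < (p i 0 + p i 1) *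
        (urLoad p σ 0 + p i 0 - urLoad p σ 1 - 2 * p i 1) :=
      mul_pos (add_pos (hp i 0) (hp i 1)) (by linarith)
    nlinarith [hprod]
  · -- σ i = 1, b = 0
    rw [ha, hb] at hcond
    unfold urPhi
    rw [urLoad_update, urLoad_update, urSumSq_update, ha, hb]
    simp only [if_pos rfl, if_true, if_neg (by decide : ¬ ((0 : Fin 2) = 1)),
      if_neg (by decide : ¬ ((1 : Fin 2) = 0))]
    have hprod : 0 < (p i 1 + p i 0) *
        (urLoad p σ 1 + p i 1 - urLoad p σ 0 - 2 * p i 0) :=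
      mul_pos (add_pos (hp i 1) (hp i 0)) (by linarith)
    nlinarith [hprod]
  · exact absurd (hb.trans ha.symm) hba

/-- On 2 unrelated machines the scheduling game under RANDOM is a
potential game: every sequence of better response moves terminates, and from any
profile the dynamic reaches a pure Nash equilibrium. -/
theorem random_two_unrelated_potential_game
    {n : ℕ} (p : Fin n → Fin 2 → ℝ) (hp : ∀ i j, 0 < p i j) :
    (¬ ∃ f : ℕ → (Fin n → Fin 2), ∀ t, urRandomStep p (f t) (f (t + 1))) ∧
    (∀ σ₀ : Fin n → Fin 2, ∃ σ : Fin n → Fin 2,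
      Relation.ReflTransGen (urRandomStep p) σ₀ σ ∧ urRandomNE p σ) := by
  classical
  constructor
  · rintro ⟨f, hf⟩
    have hmono : StrictAnti (fun t => urPhi p (f t)) :=
      strictAnti_nat_of_succ_lt (fun t => urPhi_decrease p hp (hf t))
    have hinj : Function.Injective f := by
      intro a c hac
      exact hmono.injective (by simp [hac])
    obtain ⟨x, y, hne, heq⟩ := Finite.exists_ne_map_eq_of_infinite f
    exact hne (hinj heq)
  · have hrank : ∀ {σ σ' : Fin n → Fin 2}, urRandomStep p σ σ' →
        (Finset.univ.filter (fun τ => urPhi p τ < urPhi p σ')).card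
          < (Finset.univ.filter (fun τ => urPhi p τ < urPhi p σ)).card := by
      intro σ σ' hs
      have hφ := urPhi_decrease p hp hs
      apply Finset.card_lt_card
      rw [Finset.ssubset_iff_of_subset]
      · exact ⟨σ', by simp [hφ], by simp⟩
      · intro τ hτ
        simp only [Finset.mem_filter, Finset.mem_univ, true_and] at hτ ⊢
        linarith
    have main : ∀ (N : ℕ) (σ₀ : Fin n → Fin 2),
        (Finset.univ.filter (fun τ => urPhi p τ < urPhi p σ₀)).card ≤ N →
        ∃ σ : Fin n → Fin 2,
          Relation.ReflTransGen (urRandomStep p) σ₀ σ ∧ urRandomNE p σ := by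
      intro N
      induction N with
      | zero =>
        intro σ₀ h0
        refine ⟨σ₀, Relation.ReflTransGen.refl, ?_⟩
        by_contra hne
        rw [urRandomNE] at hne; push_neg at hne
        obtain ⟨i, b, hib⟩ := hne
        have hstep : urRandomStep p σ₀ (Function.update σ₀ i b) := ⟨i, b, rfl, hib⟩
        have := hrank hstep; omega
      | succ N ih =>
        intro σ₀ h0
        by_cases hNE : urRandomNE p σ₀
        · exact ⟨σ₀, Relation.ReflTransGen.refl, hNE⟩
        · rw [urRandomNE] at hNE; push_neg at hNE
          obtain ⟨i, b, hib⟩ := hNE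
          have hstep : urRandomStep p σ₀ (Function.update σ₀ i b) := ⟨i, b, rfl, hib⟩
          obtain ⟨σ, hR, hN⟩ := ih (Function.update σ₀ i b) (by have := hrank hstep; omega)
          exact ⟨σ, Relation.ReflTransGen.head hstep hR, hN⟩
    exact fun σ₀ => main _ σ₀ le_rfl
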